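/- Let γ : ℝ → ℝ be positive and continuous and let φ(x) = ∫₀^x γ(t) dt be bi-Lipschitz for distances larger than N with constants C₁, C₂ > 0. Then ω_γ(z + i) > ω_γ(z) for every z with Im z ≥ 0. -/

import Mathlib

/-!
For real `t ≠ 0`, `log*|1 - z/t|` equals `log |t - z| - log |t|` plus a term depending only on
`Re z`. Since `Im z ≥ 0`, every real point is strictly closer to `z` than to `z + i`, so, as
`γ > 0`, the integrand of `ω_γ(z + i)` strictly exceeds that of `ω_γ(z)` at every `t ≠ 0, Re z`.

The work is in the convergence of both potentials. `log*|1 - z/t|` has only logarithmic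
singularities, and it is `O(|z|² / t²)` as `|t| → ∞` because the first-order term of the logarithm
is cancelled. The upper Lipschitz bound for `φ` bounds the mass of `γ` on every interval of
length `N` by `C₂ N`; summing over consecutive such blocks shows that `γ(t) / t²` is integrable
at infinity.
-/

open MeasureTheory intervalIntegral

/-- The modified logarithm `log*|1 - z/t|`. -/
noncomputable def logStar (z : ℂ) (t : ℝ) : ℝ :=
  if 1 < |t| then Real.log (‖1 - z / (t : ℂ)‖) + z.re / t
  else Real.log (‖1 - z / (t : ℂ)‖)

/-- The potential `ω_γ(z) = ∫ log*|1 - z/t| γ(t) dt`. -/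
noncomputable def pot (γ : ℝ → ℝ) (z : ℂ) : ℝ :=
  ∫ t : ℝ, logStar z t * γ t

open Set Filter

lemma Complex.norm_lt_norm_sub_I {w : ℂ} (hw : w.im < 1 / 2) : ‖w‖ < ‖w - Complex.I‖ := by
  rw [← sq_lt_sq₀ (norm_nonneg _) (norm_nonneg _), Complex.sq_norm, Complex.sq_norm,
    Complex.normSq_apply, Complex.normSq_apply]
  simp only [Complex.sub_re, Complex.sub_im, Complex.I_re, Complex.I_im]
  nlinarith

lemma MeasureTheory.integral_lt_integral_of_ae_lt {α : Type*} [MeasurableSpace α]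
    {μ : Measure α} [NeZero μ] {f g : α → ℝ} (hf : Integrable f μ) (hg : Integrable g μ)
    (hlt : ∀ᵐ x ∂μ, f x < g x) : ∫ x, f x ∂μ < ∫ x, g x ∂μ := by
  rw [← sub_pos, ← integral_sub hg hf, integral_pos_iff_support_of_nonneg_ae
    (hlt.mono fun x hx => (sub_pos.2 hx).le) (hg.sub hf)]
  refine pos_iff_ne_zero.2 fun h0 => ?_
  obtain ⟨x, hx, hx0⟩ := (hlt.and (measure_eq_zero_iff_ae_notMem.1 h0)).exists
  exact hx0 (sub_pos.2 hx).ne'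

section TailIntegrability

variable {g : ℝ → ℝ} {L C : ℝ}

lemma integral_div_sq_le (hg : Continuous g) (hg0 : ∀ t, 0 ≤ g t) {a : ℝ} (ha : 0 < a)
    (hL : 0 ≤ L) : ∫ t in a..a + L, g t / t ^ 2 ≤ (∫ t in a..a + L, g t) / a ^ 2 := by
  rw [← intervalIntegral.integral_div]
  refine intervalIntegral.integral_mono_on (by linarith) ?_
    ((hg.intervalIntegrable _ _).div_const _) fun t ht => ?_
  · refine (hg.continuousOn.div (continuousOn_pow 2) fun t ht => ?_).intervalIntegrable
    have : 0 < t := ha.trans_le ((le_min le_rfl (by linarith)).trans ht.1)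
    positivity
  · exact div_le_div_of_nonneg_left (hg0 t) (by positivity) (pow_le_pow_left₀ ha.le ht.1 2)

theorem integrableOn_Ioi_div_sq (hg : Continuous g) (hg0 : ∀ t, 0 ≤ g t) (hL : 0 < L)
    (hC : ∀ a, ∫ t in a..a + L, g t ≤ C) {R : ℝ} (hR : L ≤ R) :
    IntegrableOn (fun t => g t / t ^ 2) (Ioi R) := by
  have hR0 : 0 < R := hL.trans_le hR
  have hC0 : 0 ≤ C :=
    (intervalIntegral.integral_nonneg (by linarith) fun t _ => hg0 t).trans (hC 0)
  have hcont : ContinuousOn (fun t => g t / t ^ 2) (Ici R) :=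
    hg.continuousOn.div (continuousOn_pow 2) fun t ht => by
      have : 0 < t := hR0.trans_le ht
      positivity
  set a : ℕ → ℝ := fun k => R + k * L
  have haR : ∀ k, R ≤ a k := fun k => by simp only [a]; nlinarith [k.cast_nonneg (α := ℝ)]
  have hint : ∀ x y, R ≤ x → R ≤ y → IntervalIntegrable (fun t => g t / t ^ 2) volume x y :=
    fun x y hx hy => (hcont.mono fun t ht => (le_min hx hy).trans ht.1).intervalIntegrable
  -- for `x ≥ L`, `C / x² ≤ (2C / L) (1 / x - 1 / (x + L))`, and the right side telescopes
  have hblock : ∀ k,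
      ∫ t in a k..a (k + 1), g t / t ^ 2 ≤ 2 * C / L * (1 / a k - 1 / a (k + 1)) := by
    intro k
    have hak : 0 < a k := hR0.trans_le (haR k)
    have hsucc : a (k + 1) = a k + L := by simp only [a]; push_cast; ring
    rw [hsucc]
    calc ∫ t in a k..a k + L, g t / t ^ 2 ≤ C / a k ^ 2 :=
          (integral_div_sq_le hg hg0 hak hL.le).trans (by gcongr; exact hC _)
      _ ≤ 2 * C / L * (1 / a k - 1 / (a k + L)) := by
          rw [div_sub_div _ _ hak.ne' (by positivity), div_le_iff₀ (by positivity)]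
          field_simp
          nlinarith [mul_nonneg (mul_nonneg hC0 hL.le) (sub_nonneg.2 (hR.trans (haR k)))]
  have hnorm : ∀ t, ‖g t / t ^ 2‖ = g t / t ^ 2 :=
    fun t => Real.norm_of_nonneg (div_nonneg (hg0 t) (sq_nonneg t))
  refine integrableOn_Ioi_of_intervalIntegral_norm_bounded (2 * C / L * (1 / R)) R
    (l := atTop) (b := a) (fun k => (hint R (a k) le_rfl (haR k)).1)
    (tendsto_atTop_add_const_left _ R (tendsto_natCast_atTop_atTop.atTop_mul_const hL))
    (Eventually.of_forall fun n => ?_)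
  calc ∫ t in R..a n, ‖g t / t ^ 2‖
      = ∑ k ∈ Finset.range n, ∫ t in a k..a (k + 1), g t / t ^ 2 := by
        rw [intervalIntegral.sum_integral_adjacent_intervals fun k _ => hint _ _ (haR k) (haR _)]
        simp [a, hnorm]
    _ ≤ ∑ k ∈ Finset.range n, 2 * C / L * (1 / a k - 1 / a (k + 1)) :=
        Finset.sum_le_sum fun k _ => hblock k
    _ = 2 * C / L * (1 / R - 1 / a n) := by rw [← Finset.mul_sum, Finset.sum_range_sub']; simp [a]
    _ ≤ 2 * C / L * (1 / R) := by
        have : 0 ≤ 1 / a n := one_div_nonneg.2 (hR0.le.trans (haR n))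
        gcongr
        linarith

theorem integrableOn_abs_gt_div_sq (hg : Continuous g) (hg0 : ∀ t, 0 ≤ g t) (hL : 0 < L)
    (hC : ∀ a, ∫ t in a..a + L, g t ≤ C) {R : ℝ} (hR : L ≤ R) :
    IntegrableOn (fun t => g t / t ^ 2) {t | R < |t|} := by
  have hneg : IntegrableOn (fun t => g (-t) / t ^ 2) (Ioi R) := by
    refine integrableOn_Ioi_div_sq (hg.comp continuous_neg) (fun t => hg0 _) hL (C := C)
      (fun a => ?_) hR
    simpa [intervalIntegral.integral_comp_neg, neg_add_eq_sub] using hC (-a - L)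
  have hunion : {t : ℝ | R < |t|} = Iio (-R) ∪ Ioi R := by
    ext t
    simp only [mem_ofPred_eq, mem_union, mem_Iio, mem_Ioi, lt_abs, lt_neg, or_comm]
  rw [hunion]
  exact IntegrableOn.union
    ((IntegrableOn.comp_neg_Iio (c := -R) (by rwa [neg_neg])).congr_fun
      (fun t _ => by simp only [neg_neg, neg_sq]) measurableSet_Iio)
    (integrableOn_Ioi_div_sq hg hg0 hL hC hR)

end TailIntegrability

section LogStar

lemma logStar_eq_log_norm_add (z : ℂ) (t : ℝ) :
    logStar z t = Real.log ‖1 - z / t‖ + if 1 < |t| then z.re / t else 0 := by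
  unfold logStar
  split_ifs <;> simp

lemma measurable_logStar (z : ℂ) : Measurable (logStar z) :=
  Measurable.ite (measurableSet_lt measurable_const measurable_abs) (by fun_prop) (by fun_prop)

lemma intervalIntegrable_logStar (z : ℂ) (a b : ℝ) :
    IntervalIntegrable (logStar z) volume a b := by
  have hmero : MeromorphicOn (fun t : ℝ => 1 - z / (t : ℂ)) (uIcc a b) := fun t _ =>
    (MeromorphicAt.const _ _).sub
      ((MeromorphicAt.const _ _).div (Complex.ofRealCLM.analyticAt t).meromorphicAt)
  have hcorr : IntervalIntegrable (fun t : ℝ => if 1 < |t| then z.re / t else 0) volume a b := by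
    refine (intervalIntegrable_const (c := |z.re|)).mono_fun'
      ((Measurable.ite (measurableSet_lt measurable_const measurable_abs)
        (measurable_const.div measurable_id) measurable_const).aestronglyMeasurable)
      (ae_of_all _ fun t => ?_)
    dsimp only
    split_ifs with ht
    · rw [Real.norm_eq_abs, abs_div]
      exact div_le_self (abs_nonneg _) ht.le
    · simp
  have := hmero.intervalIntegrable_log_norm.add hcorr
  simpa only [← logStar_eq_log_norm_add] using this

lemma abs_logStar_le {z : ℂ} {t : ℝ} (ht : 1 < |t|) (hzt : 2 * ‖z‖ ≤ |t|) :
    |logStar z t| ≤ ‖z‖ ^ 2 / t ^ 2 := by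
  set w : ℂ := -(z / t)
  have hw : ‖w‖ = ‖z‖ / |t| := by simp [w]
  have hw2 : ‖w‖ ≤ 1 / 2 := by
    rw [hw, div_le_iff₀ (by linarith)]
    linarith
  have hre : logStar z t = (Complex.log (1 + w) - w).re := by
    simp [logStar, if_pos ht, w, Complex.log_re, ← sub_eq_add_neg]
  calc |logStar z t| ≤ ‖Complex.log (1 + w) - w‖ := hre ▸ Complex.abs_re_le_norm _
    _ ≤ ‖w‖ ^ 2 * (1 - ‖w‖)⁻¹ / 2 := Complex.norm_log_one_add_sub_self_le (by linarith)
    _ ≤ ‖w‖ ^ 2 := by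
        have : (1 - ‖w‖)⁻¹ ≤ 2 := by
          rw [inv_le_comm₀ (by linarith) two_pos]
          linarith
        nlinarith [sq_nonneg ‖w‖]
    _ = ‖z‖ ^ 2 / t ^ 2 := by rw [hw, div_pow, sq_abs]

lemma logStar_lt_logStar_add_I {z : ℂ} (hz : -(1 / 2) < z.im) {t : ℝ} (ht : t ≠ 0)
    (htz : (t : ℂ) ≠ z) : logStar z t < logStar (z + Complex.I) t := by
  have htC : (t : ℂ) ≠ 0 := Complex.ofReal_ne_zero.2 ht
  have hnorm : ∀ w : ℂ, ‖1 - w / t‖ = ‖(t : ℂ) - w‖ / |t| := fun w => by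
    rw [one_sub_div htC, norm_div, Complex.norm_real, Real.norm_eq_abs]
  have hlog : Real.log ‖1 - z / t‖ < Real.log ‖1 - (z + Complex.I) / t‖ := by
    rw [hnorm, hnorm]
    refine Real.log_lt_log (div_pos (norm_pos_iff.2 (sub_ne_zero.2 htz)) (abs_pos.2 ht)) ?_
    rw [← sub_sub]
    exact div_lt_div_of_pos_right (Complex.norm_lt_norm_sub_I (by simp; linarith)) (abs_pos.2 ht)
  rw [logStar_eq_log_norm_add, logStar_eq_log_norm_add, Complex.add_re, Complex.I_re, add_zero]
  linarith

end LogStar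

theorem integrable_logStar_mul {γ : ℝ → ℝ} {L C : ℝ} (hγ : Continuous γ) (hγ0 : ∀ t, 0 ≤ γ t)
    (hL : 0 < L) (hC : ∀ a, ∫ t in a..a + L, γ t ≤ C) (z : ℂ) :
    Integrable (fun t => logStar z t * γ t) := by
  set R := 2 * ‖z‖ + 1 + L
  have hLR : L ≤ R := by linarith [norm_nonneg z]
  have hlocal : IntegrableOn (fun t => logStar z t * γ t) (Icc (-R) R) :=
    ((intervalIntegrable_iff_integrableOn_Icc_of_le (by linarith)).1
      (intervalIntegrable_logStar z (-R) R)).mul_continuousOn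
      hγ.continuousOn isCompact_Icc
  have hcompl : (Icc (-R) R)ᶜ = {t | R < |t|} := by
    ext t
    simp only [mem_compl_iff, mem_Icc, mem_ofPred_eq, lt_abs, not_and_or, not_le, lt_neg, or_comm]
  have htail : IntegrableOn (fun t => logStar z t * γ t) (Icc (-R) R)ᶜ := by
    rw [hcompl]
    refine ((integrableOn_abs_gt_div_sq hγ hγ0 hL hC hLR).const_mul
      (‖z‖ ^ 2)).mono' ?_ (ae_restrict_of_forall_mem ?_ fun t ht => ?_)
    · exact ((measurable_logStar z).mul hγ.measurable).aestronglyMeasurable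
    · exact measurableSet_lt measurable_const measurable_abs
    · have hRt : R < |t| := ht
      rw [norm_mul, Real.norm_eq_abs, Real.norm_of_nonneg (hγ0 t)]
      calc |logStar z t| * γ t ≤ ‖z‖ ^ 2 / t ^ 2 * γ t :=
            mul_le_mul_of_nonneg_right
              (abs_logStar_le (by linarith [norm_nonneg z]) (by linarith)) (hγ0 t)
        _ = ‖z‖ ^ 2 * (γ t / t ^ 2) := by ring
  rw [← integrableOn_univ, ← union_compl_self (Icc (-R) R)]
  exact hlocal.union htail

theorem stmt_7_general (γ : ℝ → ℝ) (hγpos : ∀ t, 0 < γ t) (hγcont : Continuous γ)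
    (φ : ℝ → ℝ) (hφ : ∀ x, φ x = ∫ t in (0:ℝ)..x, γ t)
    (N C₁ C₂ : ℝ) (hN : 0 < N)
    (hbl : ∀ x₁ x₂ : ℝ, N ≤ x₂ - x₁ →
      C₁ * (x₂ - x₁) ≤ φ x₂ - φ x₁ ∧ φ x₂ - φ x₁ ≤ C₂ * (x₂ - x₁)) :
    ∀ z : ℂ, 0 ≤ z.im → pot γ z < pot γ (z + Complex.I) := by
  have hγ0 : ∀ t, 0 ≤ γ t := fun t => (hγpos t).le
  have hblock : ∀ a, ∫ t in a..a + N, γ t ≤ C₂ * N := fun a => by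
    have h := (hbl a (a + N) (by simp)).2
    rwa [hφ, hφ, intervalIntegral.integral_interval_sub_left (hγcont.intervalIntegrable _ _)
      (hγcont.intervalIntegrable _ _), add_sub_cancel_left] at h
  intro z hz
  refine integral_lt_integral_of_ae_lt (integrable_logStar_mul hγcont hγ0 hN hblock z)
    (integrable_logStar_mul hγcont hγ0 hN hblock _) ?_
  filter_upwards [volume.ae_ne 0, volume.ae_ne z.re] with t ht0 htz
  exact mul_lt_mul_of_pos_right
    (logStar_lt_logStar_add_I (by linarith) ht0 fun h => htz (by simp [← h])) (hγpos t)

theorem stmt_7 (γ : ℝ → ℝ) (hγpos : ∀ t, 0 < γ t) (hγcont : Continuous γ)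
    (φ : ℝ → ℝ) (hφ : ∀ x, φ x = ∫ t in (0:ℝ)..x, γ t)
    (N C₁ C₂ : ℝ) (hN : 0 < N) (hC₁ : 0 < C₁) (hC₂ : 0 < C₂)
    (hbl : ∀ x₁ x₂ : ℝ, N ≤ x₂ - x₁ →
      C₁ * (x₂ - x₁) ≤ φ x₂ - φ x₁ ∧ φ x₂ - φ x₁ ≤ C₂ * (x₂ - x₁)) :
    ∀ z : ℂ, 0 ≤ z.im → pot γ z < pot γ (z + Complex.I) :=
  stmt_7_general γ hγpos hγcont φ hφ N C₁ C₂ hN hbl
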